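/- Let (C, J) be a small Grothendieck site, let M : Cᵒᵖ ⥤ Grpd be a presheaf of groupoids, and let F ⊆ F' be sub-presheaves of the objects presheaf of M (so F(U) ⊆ F'(U) ⊆ Ob(M(U)) for every U, each stable under restriction along morphisms of C); regard F and F' as the full sub-presheaves of groupoids of M on these objects. Suppose every object of F' is J-locally isomorphic to objects of F: for every U and every x ∈ F'(U) there is a J-covering sieve R on U such that for every φ : V → U in R there exist w ∈ F(V) and an isomorphism φ*(x) ≅ w in M(V). Then the induced map of path-component presheaves π₀F → π₀F' induces an isomorphism of the associated J-sheaves. -/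

import Mathlib

open CategoryTheory Opposite

universe u

/-- The setoid on a subset `S` of the objects of a groupoid `X` identifying two
elements when they are isomorphic in `X`. -/
def subSetoid (X : Grpd.{u, u}) (S : Set X) : Setoid S where
  r a b := Nonempty ((a : X) ≅ (b : X))
  iseqv := ⟨fun _ => ⟨Iso.refl _⟩, fun h => ⟨h.some.symm⟩,
    fun h₁ h₂ => ⟨h₁.some.trans h₂.some⟩⟩

/-- The path-component presheaf of the full sub-presheaf of groupoids of `M` on a
restriction-stable family of subsets `F` of objects: its sections over `U` are
the classes of elements of `F(U)` under isomorphism in `M(U)`. -/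
def pi0Sub {C : Type u} [SmallCategory C] (M : Cᵒᵖ ⥤ Grpd.{u, u})
    (F : ∀ U : C, Set (M.obj (op U)))
    (hF : ∀ ⦃V U : C⦄ (φ : V ⟶ U), ∀ x ∈ F U, (M.map φ.op).obj x ∈ F V) :
    Cᵒᵖ ⥤ Type u where
  obj U := Quotient (subSetoid (M.obj U) (F U.unop))
  map {U V} φ := TypeCat.ofHom (Quotient.map
    (fun x => ⟨(M.map φ).obj x.1, hF φ.unop _ x.2⟩)
    (fun _ _ h => ⟨(M.map φ).mapIso h.some⟩))
  map_id U := by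
    ext a
    obtain ⟨x⟩ := a
    have h : (M.map (𝟙 U)).obj x.1 = x.1 := by rw [M.map_id]; rfl
    exact Quotient.sound ⟨eqToIso h⟩
  map_comp {U V W} φ ψ := by
    ext a
    obtain ⟨x⟩ := a
    have h : (M.map (φ ≫ ψ)).obj x.1 = (M.map ψ).obj ((M.map φ).obj x.1) := by
      rw [M.map_comp]; rfl
    exact Quotient.sound ⟨eqToIso h⟩

/-- The map of path-component presheaves induced by an inclusion `F ⊆ F'` of
restriction-stable families of objects of `M`. -/
def pi0SubIncl {C : Type u} [SmallCategory C] (M : Cᵒᵖ ⥤ Grpd.{u, u})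
    (F F' : ∀ U : C, Set (M.obj (op U)))
    (hF : ∀ ⦃V U : C⦄ (φ : V ⟶ U), ∀ x ∈ F U, (M.map φ.op).obj x ∈ F V)
    (hF' : ∀ ⦃V U : C⦄ (φ : V ⟶ U), ∀ x ∈ F' U, (M.map φ.op).obj x ∈ F' V)
    (hsub : ∀ U : C, F U ⊆ F' U) :
    pi0Sub M F hF ⟶ pi0Sub M F' hF' where
  app U := TypeCat.ofHom (Quotient.map (Set.inclusion (hsub U.unop)) (fun _ _ h => h))
  naturality {U V} φ := by
    ext a
    induction a using Quotient.ind
    rfl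

/-- If every object of `F'` is `J`-locally isomorphic to objects of `F`, then the
induced map of path-component presheaves `π₀F → π₀F'` induces an isomorphism of
associated `J`-sheaves. -/
theorem pi0_incl_isIso_of_locally_isomorphic
    {C : Type u} [SmallCategory C] (J : GrothendieckTopology C)
    (M : Cᵒᵖ ⥤ Grpd.{u, u})
    (F F' : ∀ U : C, Set (M.obj (op U)))
    (hF : ∀ ⦃V U : C⦄ (φ : V ⟶ U), ∀ x ∈ F U, (M.map φ.op).obj x ∈ F V)
    (hF' : ∀ ⦃V U : C⦄ (φ : V ⟶ U), ∀ x ∈ F' U, (M.map φ.op).obj x ∈ F' V)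
    (hsub : ∀ U : C, F U ⊆ F' U)
    (hloc : ∀ (U : C), ∀ x ∈ F' U,
        ∃ R ∈ J U, ∀ ⦃V : C⦄ (φ : V ⟶ U), R.arrows φ →
          ∃ w ∈ F V, Nonempty ((M.map φ.op).obj x ≅ w)) :
    IsIso ((presheafToSheaf J (Type u)).map (pi0SubIncl M F F' hF hF' hsub)) := by
  have hinj : Presheaf.IsLocallyInjective J (pi0SubIncl M F F' hF hF' hsub) := by
    apply Presheaf.isLocallyInjective_of_injective
    intro X a b h
    induction a using Quotient.ind with
    | _ x =>
      induction b using Quotient.ind with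
      | _ y =>
        refine Quotient.sound ?_
        have h' : Quotient.mk (subSetoid (M.obj X) (F' X.unop))
            (Set.inclusion (hsub X.unop) x) = Quotient.mk _ (Set.inclusion (hsub X.unop) y) := h
        exact ⟨(Quotient.exact h').some⟩
  have hsurj : Presheaf.IsLocallySurjective J (pi0SubIncl M F F' hF hF' hsub) := by
    constructor
    intro U s
    induction s using Quotient.ind with
    | _ x =>
      obtain ⟨R, hR, h⟩ := hloc U x.1 x.2
      refine J.superset_covering ?_ hR
      intro V φ hφ
      obtain ⟨w, hw, ⟨e⟩⟩ := h φ hφ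
      exact ⟨Quotient.mk _ ⟨w, hw⟩, Quotient.sound ⟨e.symm⟩⟩
  haveI : J.HasSheafCompose (forget (Type u)) :=
    hasSheafCompose_of_preservesLimitsOfSize (F := forget (Type u)) J
  rw [← Sheaf.isLocallyBijective_iff_isIso (A := Type u)]
  exact ⟨(Presheaf.isLocallyInjective_presheafToSheaf_map_iff _ _).2 hinj,
    (Presheaf.isLocallySurjective_presheafToSheaf_map_iff _ _).2 hsurj⟩
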